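/- Let G be a digraph and a, b vertices of G. Set A := N⁺(a) \ {b} and B := N⁻(b) \ {a}. Let ω ∈ Ω₃(G) be a minimal ∂-invariant (a,b)-cluster with no terminal elements, i.e., every elementary term e_{a i j b} occurring in ω with nonzero coefficient satisfies a ↛ j, a ≠ j, i ↛ b, and i ≠ b. Then there exist an integer m ≥ 2, a scalar c ∈ K, pairwise distinct vertices i₀,…,i_{m−1} ∈ A \ B, and pairwise distinct vertices j₀,…,j_{m−1} ∈ B \ A with i_k → j_k and i_{k+1} → j_k for all k = 0,…,m−1 (indices mod m), such that ω = c · Σ_{k=0}^{m−1} (e_{a i_k j_k b} − e_{a i_{k+1} j_k b}). -/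

import Mathlib

open scoped BigOperators
open Classical

/-- A digraph: an irreflexive relation on a vertex type. -/
structure Dgraph (V : Type*) where
  Adj : V → V → Prop
  loopless : ∀ v : V, ¬ Adj v v

/-- An elementary `p`-path on the vertex type `V`: a sequence of `p+1` vertices. -/
abbrev EPath (V : Type*) (p : ℕ) := Fin (p + 1) → V

/-- A path is regular if consecutive vertices are distinct. -/
def IsRegularPath {V : Type*} {p : ℕ} (f : EPath V p) : Prop :=
  ∀ k : Fin p, f k.castSucc ≠ f k.succ

/-- A path is allowed if consecutive vertices are joined by an arrow. -/
def IsAllowedPath {V : Type*} (G : Dgraph V) {p : ℕ} (f : EPath V p) : Prop :=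
  ∀ k : Fin p, G.Adj (f k.castSucc) (f k.succ)

/-- The projection of `Λ_p` onto its regular part; this realizes `R_p = Λ_p / I_p`
as the subspace of `Λ_p` spanned by the regular elementary paths. -/
noncomputable def regProj (K : Type*) [Field K] (V : Type*) (p : ℕ) :
    (EPath V p →₀ K) →ₗ[K] (EPath V p →₀ K) :=
  Finsupp.linearCombination K
    (fun f : EPath V p => if IsRegularPath f then Finsupp.single f (1 : K) else 0)

/-- The (non-reduced) boundary operator on `Λ`. -/
noncomputable def bdryFull (K : Type*) [Field K] (V : Type*) (p : ℕ) :
    (EPath V (p + 1) →₀ K) →ₗ[K] (EPath V p →₀ K) :=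
  Finsupp.linearCombination K
    (fun f : EPath V (p + 1) =>
      ∑ q : Fin (p + 2), ((-1 : K) ^ (q : ℕ)) • Finsupp.single (f ∘ q.succAbove) (1 : K))

/-- The boundary operator `∂` on the regular part (i.e. on `R`). -/
noncomputable def bdry (K : Type*) [Field K] (V : Type*) (p : ℕ) :
    (EPath V (p + 1) →₀ K) →ₗ[K] (EPath V p →₀ K) :=
  (regProj K V p).comp (bdryFull K V p)

/-- The span of the regular elementary paths: the realization of `R_p` inside `Λ_p`. -/
noncomputable def regularMod (K : Type*) [Field K] (V : Type*) (p : ℕ) :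
    Submodule K (EPath V p →₀ K) :=
  Submodule.span K {x | ∃ f : EPath V p, IsRegularPath f ∧ x = Finsupp.single f (1 : K)}

/-- `A_p(G)`: the span of the allowed elementary paths. -/
noncomputable def allowedMod (K : Type*) [Field K] (V : Type*) (G : Dgraph V) (p : ℕ) :
    Submodule K (EPath V p →₀ K) :=
  Submodule.span K {x | ∃ f : EPath V p, IsAllowedPath G f ∧ x = Finsupp.single f (1 : K)}

/-- `Ω_p(G)`: the space of ∂-invariant `p`-paths. -/
noncomputable def Omega (K : Type*) [Field K] (V : Type*) (G : Dgraph V) :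
    (p : ℕ) → Submodule K (EPath V p →₀ K)
  | 0 => allowedMod K V G 0
  | (p + 1) => allowedMod K V G (p + 1) ⊓ (allowedMod K V G p).comap (bdry K V p)

/-- An `(a,b)`-cluster: every elementary path occurring with nonzero coefficient
starts at `a` and ends at `b`. -/
def IsCluster {K : Type*} [Field K] {V : Type*} {p : ℕ} (a b : V) (ω : EPath V p →₀ K) : Prop :=
  ∀ f ∈ ω.support, f 0 = a ∧ f (Fin.last p) = b

/-- A minimal ∂-invariant path: a nonzero element of `Ω_p` such that no nonzero
∂-invariant path is supported on a proper (nonempty) subset of its support. -/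
def IsMinimal (K : Type*) [Field K] {V : Type*} (G : Dgraph V) (p : ℕ)
    (ω : EPath V p →₀ K) : Prop :=
  ω ∈ Omega K V G p ∧ ω ≠ 0 ∧
    ∀ ω' : EPath V p →₀ K, ω' ∈ Omega K V G p → ω' ≠ 0 → ¬ (ω'.support ⊂ ω.support)

/-- A digraph map: every arrow goes to an arrow or collapses to a vertex. -/
structure DgraphMap {V W : Type*} (X : Dgraph V) (Y : Dgraph W) where
  toFun : V → W
  map_adj : ∀ ⦃u v : V⦄, X.Adj u v → Y.Adj (toFun u) (toFun v) ∨ toFun u = toFun v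

/-- The induced map `f_* : R_n(X) → R_n(Y)` (in the regular-part realization):
push forward elementary paths and kill the irregular ones. -/
noncomputable def inducedMap (K : Type*) [Field K] {V W : Type*} (φ : V → W) (p : ℕ) :
    (EPath V p →₀ K) →ₗ[K] (EPath W p →₀ K) :=
  (regProj K W p).comp (Finsupp.lmapDomain K K (fun f : EPath V p => φ ∘ f))

/-- Cyclic successor on `Fin m`. -/
def finRot {m : ℕ} (k : Fin m) : Fin m := ⟨((k : ℕ) + 1) % m, Nat.mod_lt _ k.pos⟩

/-- The vertices of the trapezohedron `T_m`. -/
inductive TVert (m : ℕ) : Type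
  | a : TVert m
  | b : TVert m
  | vi : Fin m → TVert m
  | vj : Fin m → TVert m

/-- The adjacency relation of the trapezohedron `T_m`:
`a → i_k`, `i_k → j_k`, `i_{k+1} → j_k`, `j_k → b` (indices mod `m`). -/
def TrapAdj (m : ℕ) : TVert m → TVert m → Prop
  | TVert.a, TVert.vi _ => True
  | TVert.vi k, TVert.vj l => k = l ∨ k = finRot l
  | TVert.vj _, TVert.b => True
  | _, _ => False

/-- The trapezohedron digraph `T_m`. -/
def Trap (m : ℕ) : Dgraph (TVert m) where
  Adj := TrapAdj m
  loopless := by intro v h; cases v <;> exact h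

/-- The trapezohedral path `τ_m`. -/
noncomputable def tau (K : Type*) [Field K] (m : ℕ) : EPath (TVert m) 3 →₀ K :=
  ∑ k : Fin m,
    (Finsupp.single ![TVert.a, TVert.vi k, TVert.vj k, TVert.b] (1 : K)
      - Finsupp.single ![TVert.a, TVert.vi (finRot k), TVert.vj k, TVert.b] (1 : K))

/-- The submodule of `(a,b)`-clusters. -/
def clusterMod (K : Type*) [Field K] (V : Type*) (p : ℕ) (a b : V) :
    Submodule K (EPath V p →₀ K) where
  carrier := {ω | ∀ f ∈ ω.support, f 0 = a ∧ f (Fin.last p) = b}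
  add_mem' := by
    intro x y hx hy f hf
    rcases Finset.mem_union.mp (Finsupp.support_add hf) with h | h
    exacts [hx f h, hy f h]
  zero_mem' := by intro f hf; simp at hf
  smul_mem' := by
    intro c x hx f hf
    exact hx f (Finsupp.support_smul hf)

/-- `Ω₃^{(a,b)}(G)`: the ∂-invariant `(a,b)`-clusters. -/
noncomputable def OmegaAB (K : Type*) [Field K] (V : Type*) (G : Dgraph V) (a b : V) :
    Submodule K (EPath V 3 →₀ K) :=
  Omega K V G 3 ⊓ clusterMod K V 3 a b

/-- Out-neighbourhood. -/
def Nplus {V : Type*} (G : Dgraph V) (v : V) : Set V := {w | G.Adj v w}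

/-- In-neighbourhood. -/
def Nminus {V : Type*} (G : Dgraph V) (v : V) : Set V := {w | G.Adj w v}

/-- `E(X,Y)`: the edges of `G` starting in `X` and ending in `Y`. -/
def Ebetween {V : Type*} (G : Dgraph V) (X Y : Set V) : Set (V × V) :=
  {p | p.1 ∈ X ∧ p.2 ∈ Y ∧ G.Adj p.1 p.2}

/-- `A = N⁺(a) \ {b}`. -/
def setA {V : Type*} (G : Dgraph V) (a b : V) : Set V := Nplus G a \ {b}

/-- `B = N⁻(b) \ {a}`. -/
def setB {V : Type*} (G : Dgraph V) (a b : V) : Set V := Nminus G b \ {a}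

/-- The vertex set of `H = Ind(A \ B, B \ A)`. -/
def Hverts {V : Type*} (G : Dgraph V) (a b : V) : Set V :=
  (setA G a b \ setB G a b) ∪ (setB G a b \ setA G a b)

/-- `H = Ind(A \ B, B \ A)` regarded as an undirected (simple) graph on its vertex set. -/
def Hgraph {V : Type*} (G : Dgraph V) (a b : V) : SimpleGraph (Hverts G a b) where
  Adj u v :=
    ((u : V) ∈ setA G a b \ setB G a b ∧ (v : V) ∈ setB G a b \ setA G a b ∧ G.Adj u v)
      ∨ ((v : V) ∈ setA G a b \ setB G a b ∧ (u : V) ∈ setB G a b \ setA G a b ∧ G.Adj v u)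
  symm := ⟨fun u v h => h.symm⟩
  loopless := by
    refine ⟨fun u h => ?_⟩
    rcases h with ⟨_, _, h3⟩ | ⟨_, _, h3⟩ <;> exact G.loopless _ h3

/-- The set of vertices of `G` belonging to the connected component `c` of `H`. -/
def compVerts {V : Type*} (G : Dgraph V) (a b : V)
    (c : (Hgraph G a b).ConnectedComponent) : Set V :=
  {v | ∃ h : v ∈ Hverts G a b, (Hgraph G a b).connectedComponentMk ⟨v, h⟩ = c}

/-- The set `S_k` associated to a connected component of `H`. -/
def Sset {V : Type*} (G : Dgraph V) (a b : V)
    (c : (Hgraph G a b).ConnectedComponent) : Set (V × V) :=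
  Ebetween G (compVerts G a b c ∩ (setA G a b \ setB G a b))
      ((Nplus G a ∪ {a}) ∩ Nminus G b)
    ∪ Ebetween G (Nplus G a ∩ (Nminus G b ∪ {b}))
      (compVerts G a b c ∩ (setB G a b \ setA G a b))

/-!
The coefficients `ω(e_{aijb})` form a matrix supported on the arrows `i → j` with `i ∈ A \ B` and
`j ∈ B \ A`. The faces `e_{aib}` and `e_{ajb}` of `e_{aijb}` are not allowed, so ∂-invariance makes
every row and column sum of this matrix vanish, and every nonzero entry has another nonzero entry in
its row and in its column. Walking alternately along rows and columns until a vertex repeats gives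
a cycle `i₀ — j₀ — i₁ — j₁ — ⋯`. Its trapezohedral path `τ` is ∂-invariant, because the
non-allowed faces telescope around the cycle, and is supported inside `ω`; then
`ω - ω(e_{a i₀ j₀ b}) • τ` is ∂-invariant and vanishes at `e_{a i₀ j₀ b}`, so minimality of `ω`
forces it to be zero.
-/

lemma finRot_eq_finRotate {m : ℕ} (k : Fin m) : finRot k = finRotate m k := by
  obtain _ | m := m
  · exact k.elim0
  · ext
    simp [finRot, Fin.val_add]

lemma finRot_ne_self {m : ℕ} (hm : 2 ≤ m) (k : Fin m) : finRot k ≠ k := by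
  intro h
  have hk := congrArg Fin.val h
  simp only [finRot] at hk
  rcases Nat.lt_or_ge ((k : ℕ) + 1) m with hlt | hge
  · rw [Nat.mod_eq_of_lt hlt] at hk; omega
  · rw [show (k : ℕ) + 1 = m by omega, Nat.mod_self] at hk; omega

lemma exists_lt_eq_injOn_Iio {γ : Type*} {v : ℕ → γ} (hv : (Set.range v).Finite) :
    ∃ s t, s < t ∧ v s = v t ∧ Set.InjOn v (Set.Iio t) := by
  have hrep : ∃ t, ∃ s < t, v s = v t := by
    obtain ⟨s, t, hst, h⟩ :=
      Set.Finite.exists_lt_map_eq_of_forall_mem (f := v) (t := Set.range v) (fun n => ⟨n, rfl⟩) hv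
    exact ⟨t, s, hst, h⟩
  obtain ⟨s, hst, hs⟩ := Nat.find_spec hrep
  refine ⟨s, _, hst, hs, fun p hp q hq hpq => ?_⟩
  by_contra hne
  rcases lt_or_gt_of_ne hne with h | h
  · exact Nat.find_min hrep hq ⟨p, h, hpq⟩
  · exact Nat.find_min hrep hp ⟨q, h, hpq.symm⟩

lemma Finset.exists_mem_ne_of_sum_eq_zero {ι M : Type*} [AddCommMonoid M] {s : Finset ι}
    {g : ι → M} (h : ∑ i ∈ s, g i = 0) {x : ι} (hx : x ∈ s) (hgx : g x ≠ 0) :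
    ∃ y ∈ s, y ≠ x := by
  by_contra! hall
  rw [Finset.sum_eq_single_of_mem x hx fun y hy hne => absurd (hall y hy) hne] at h
  exact hgx h

section BipartiteCycles

variable {α β : Type*}

/-- A cycle `i₀ — j₀ — i₁ — j₁ — ⋯ — i_{m-1} — j_{m-1} — i₀` of distinct vertices in the bipartite
graph of `R`. -/
def HasBipartiteCycle (R : α → β → Prop) : Prop :=
  ∃ (m : ℕ) (_ : 2 ≤ m) (iv : Fin m → α) (jv : Fin m → β), Function.Injective iv ∧
    Function.Injective jv ∧ (∀ k, R (iv k) (jv k)) ∧ ∀ k, R (iv (finRot k)) (jv k)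

lemma HasBipartiteCycle.of_flip {R : α → β → Prop} (h : HasBipartiteCycle (flip R)) :
    HasBipartiteCycle R := by
  obtain ⟨m, hm, jv, iv, hjv, hiv, hR, hR'⟩ := h
  refine ⟨m, hm, iv, jv ∘ finRot, hiv, hjv.comp ?_, hR', fun k => hR (finRot k)⟩
  simpa only [funext finRot_eq_finRotate] using (finRotate m).injective

/-- A non-backtracking walk `i₀ — j₀ — i₁ — j₁ — ⋯`, recorded by the pairs `w n = (iₙ, jₙ)`. -/
structure IsBipartiteWalk (R : α → β → Prop) (w : ℕ → α × β) : Prop where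
  rel : ∀ n, R (w n).1 (w n).2
  rel_succ : ∀ n, R (w (n + 1)).1 (w n).2
  fst_ne : ∀ n, (w (n + 1)).1 ≠ (w n).1
  snd_ne : ∀ n, (w (n + 1)).2 ≠ (w n).2

def interleave (w : ℕ → α × β) (n : ℕ) : α ⊕ β :=
  if n % 2 = 0 then .inl (w (n / 2)).1 else .inr (w (n / 2)).2

lemma interleave_even (w : ℕ → α × β) (n : ℕ) : interleave w (2 * n) = .inl (w n).1 := by
  simp [interleave]

lemma interleave_odd (w : ℕ → α × β) (n : ℕ) : interleave w (2 * n + 1) = .inr (w n).2 := by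
  simp [interleave, Nat.add_mod, Nat.add_div]

lemma interleave_shift (w : ℕ → α × β) (s p : ℕ) :
    interleave (fun n => w (s + n)) p = interleave w (2 * s + p) := by
  obtain ⟨n, rfl | rfl⟩ := Nat.even_or_odd' p
  · rw [interleave_even, ← mul_add, interleave_even]
  · rw [interleave_odd, ← add_assoc, ← mul_add, interleave_odd]

lemma interleave_transpose (w : ℕ → α × β) (p : ℕ) :
    interleave (fun n => ((w n).2, (w (n + 1)).1)) p = (interleave w (p + 1)).swap := by
  obtain ⟨n, rfl | rfl⟩ := Nat.even_or_odd' p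
  · rw [interleave_even, interleave_odd, Sum.swap_inr]
  · rw [interleave_odd, show 2 * n + 1 + 1 = 2 * (n + 1) by ring, interleave_even, Sum.swap_inl]

lemma finite_range_interleave {R : α → β → Prop} (hfin : {p : α × β | R p.1 p.2}.Finite)
    {w : ℕ → α × β} (hw : ∀ n, R (w n).1 (w n).2) : (Set.range (interleave w)).Finite := by
  have hwR : Set.range w ⊆ {p : α × β | R p.1 p.2} := by rintro _ ⟨n, rfl⟩; exact hw n
  refine ((hfin.subset hwR).image (Sum.inl ∘ Prod.fst) |>.union
    ((hfin.subset hwR).image (Sum.inr ∘ Prod.snd))).subset ?_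
  rintro _ ⟨n, rfl⟩
  unfold interleave
  split_ifs
  exacts [Or.inl ⟨w (n / 2), ⟨n / 2, rfl⟩, rfl⟩, Or.inr ⟨w (n / 2), ⟨n / 2, rfl⟩, rfl⟩]

namespace IsBipartiteWalk

variable {R : α → β → Prop} {w : ℕ → α × β}

lemma shift (hw : IsBipartiteWalk R w) (s : ℕ) : IsBipartiteWalk R (fun n => w (s + n)) where
  rel n := hw.rel (s + n)
  rel_succ n := hw.rel_succ (s + n)
  fst_ne n := hw.fst_ne (s + n)
  snd_ne n := hw.snd_ne (s + n)

lemma transpose (hw : IsBipartiteWalk R w) :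
    IsBipartiteWalk (flip R) (fun n => ((w n).2, (w (n + 1)).1)) where
  rel n := hw.rel_succ n
  rel_succ n := hw.rel (n + 1)
  fst_ne n := hw.snd_ne n
  snd_ne n := hw.fst_ne (n + 1)

lemma hasBipartiteCycle_of_interleave (hw : IsBipartiteWalk R w) {t : ℕ} (ht : 0 < t)
    (hclosed : interleave w t = interleave w 0) (hinj : Set.InjOn (interleave w) (Set.Iio t)) :
    HasBipartiteCycle R := by
  have h0 : interleave w 0 = .inl (w 0).1 := interleave_even w 0
  obtain ⟨m, rfl | rfl⟩ := Nat.even_or_odd' t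
  swap
  · simp [interleave_odd, h0] at hclosed
  rw [interleave_even, h0, Sum.inl.injEq] at hclosed
  have hm : 2 ≤ m := by
    by_contra! h
    obtain rfl : m = 1 := by omega
    exact hw.fst_ne 0 hclosed
  have hfst : Function.Injective fun k : Fin m => (w k).1 := fun k l h => Fin.ext <| by
    have := @hinj (2 * k) (by simp) (2 * l) (by simp) (by simp [interleave_even, h])
    omega
  have hsnd : Function.Injective fun k : Fin m => (w k).2 := fun k l h => Fin.ext <| by
    have := @hinj (2 * k + 1) (by simp; omega) (2 * l + 1) (by simp; omega)
      (by simp [interleave_odd, h])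
    omega
  refine ⟨m, hm, fun k => (w k).1, fun k => (w k).2, hfst, hsnd, fun k => hw.rel k, fun k => ?_⟩
  have hrot : (w (finRot k)).1 = (w (k + 1)).1 := by
    rcases Nat.lt_or_ge ((k : ℕ) + 1) m with hlt | hge
    · simp only [finRot, Nat.mod_eq_of_lt hlt]
    · simp only [finRot, show (k : ℕ) + 1 = m by omega, Nat.mod_self, hclosed]
  simpa only [hrot] using hw.rel_succ k

end IsBipartiteWalk

lemma exists_isBipartiteWalk {R : α → β → Prop} {i₀ : α} {j₀ : β} (h₀ : R i₀ j₀)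
    (hrow : ∀ i j, R i j → ∃ j' ≠ j, R i j') (hcol : ∀ i j, R i j → ∃ i' ≠ i, R i' j) :
    ∃ w, IsBipartiteWalk R w := by
  have hstep : ∀ p : {p : α × β // R p.1 p.2}, ∃ q : {p : α × β // R p.1 p.2},
      R q.1.1 p.1.2 ∧ q.1.1 ≠ p.1.1 ∧ q.1.2 ≠ p.1.2 := by
    rintro ⟨⟨i, j⟩, hij⟩
    obtain ⟨i', hi', hi'j⟩ := hcol i j hij
    obtain ⟨j', hj', hi'j'⟩ := hrow i' j hi'j
    exact ⟨⟨(i', j'), hi'j'⟩, hi'j, hi', hj'⟩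
  choose next hnext using hstep
  let p : ℕ → {p : α × β // R p.1 p.2} := fun n => next^[n] ⟨(i₀, j₀), h₀⟩
  have hp : ∀ n, p (n + 1) = next (p n) := fun n => Function.iterate_succ_apply' _ _ _
  refine ⟨fun n => (p n).1, fun n => (p n).2, fun n => ?_, fun n => ?_, fun n => ?_⟩
  · simpa only [hp] using (hnext (p n)).1
  · simpa only [hp] using (hnext (p n)).2.1
  · simpa only [hp] using (hnext (p n)).2.2

/-- Follow a non-backtracking walk up to its first repeated vertex. The closed stretch is a cycle,
read from an `α`-vertex, or from a `β`-vertex when the walk is transposed. -/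
theorem hasBipartiteCycle_of_forall_exists_ne {R : α → β → Prop}
    (hfin : {p : α × β | R p.1 p.2}.Finite) {i₀ : α} {j₀ : β} (h₀ : R i₀ j₀)
    (hrow : ∀ i j, R i j → ∃ j' ≠ j, R i j') (hcol : ∀ i j, R i j → ∃ i' ≠ i, R i' j) :
    HasBipartiteCycle R := by
  obtain ⟨w, hw⟩ := exists_isBipartiteWalk h₀ hrow hcol
  obtain ⟨s, t, hst, hvst, hinj⟩ := exists_lt_eq_injOn_Iio (finite_range_interleave hfin hw.rel)
  have hinj' : ∀ c, Set.InjOn (fun p => interleave w (c + p)) (Set.Iio (t - c)) := fun c =>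
    hinj.comp (add_right_injective c).injOn fun p hp => by simp only [Set.mem_Iio] at hp ⊢; omega
  obtain ⟨s', rfl | rfl⟩ := Nat.even_or_odd' s
  · have hv : interleave (fun n => w (s' + n)) = fun p => interleave w (2 * s' + p) :=
      funext (interleave_shift w s')
    refine (hw.shift s').hasBipartiteCycle_of_interleave (t := t - 2 * s') (by omega) ?_ ?_
    · simp only [hv, show 2 * s' + (t - 2 * s') = t by omega, add_zero, hvst]
    · rw [hv]
      exact hinj' (2 * s')
  · have hv : interleave (fun n => ((w (s' + n)).2, (w (s' + (n + 1))).1)) =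
        Sum.swap ∘ fun p => interleave w (2 * s' + 1 + p) := funext fun p => by
      refine (interleave_transpose (fun n => w (s' + n)) p).trans ?_
      rw [interleave_shift, Function.comp_apply, show 2 * s' + 1 + p = 2 * s' + (p + 1) by ring]
    refine HasBipartiteCycle.of_flip <| (hw.shift s').transpose.hasBipartiteCycle_of_interleave
      (t := t - (2 * s' + 1)) (by omega) ?_ ?_
    · simp only [hv, Function.comp_apply, show 2 * s' + 1 + (t - (2 * s' + 1)) = t by omega,
        add_zero, hvst]
    · rw [hv]
      exact Sum.swap_leftInverse.injective.comp_injOn (hinj' (2 * s' + 1))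

end BipartiteCycles

section Chains

variable {K : Type*} [Field K] {V : Type*}

lemma Dgraph.ne_of_adj (G : Dgraph V) {u v : V} (h : G.Adj u v) : u ≠ v :=
  fun e => G.loopless u (e ▸ h)

lemma regProj_apply {p : ℕ} (g : EPath V p →₀ K) (h : EPath V p) :
    regProj K V p g h = if IsRegularPath h then g h else 0 := by
  rw [regProj, Finsupp.linearCombination_apply, Finsupp.sum_apply, Finsupp.sum,
    Finset.sum_eq_single h]
  · split_ifs <;> simp
  · intro f _ hf
    split_ifs <;> simp [hf]
  · intro hh
    simp [Finsupp.notMem_support_iff.mp hh]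

lemma isRegularPath_vec3 {x y z : V} : IsRegularPath ![x, y, z] ↔ x ≠ y ∧ y ≠ z := by
  simp [IsRegularPath, Fin.forall_fin_two]

lemma isAllowedPath_vec3 {G : Dgraph V} {x y z : V} :
    IsAllowedPath G ![x, y, z] ↔ G.Adj x y ∧ G.Adj y z := by
  simp [IsAllowedPath, Fin.forall_fin_two]

lemma isAllowedPath_vec4 {G : Dgraph V} {x y z w : V} :
    IsAllowedPath G ![x, y, z, w] ↔ G.Adj x y ∧ G.Adj y z ∧ G.Adj z w := by
  simp [IsAllowedPath, Fin.forall_fin_succ]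

lemma bdryFull_single_vec4 (x y z w : V) :
    bdryFull K V 2 (Finsupp.single ![x, y, z, w] 1) =
      Finsupp.single ![y, z, w] 1 - Finsupp.single ![x, z, w] 1 + Finsupp.single ![x, y, w] 1
        - Finsupp.single ![x, y, z] 1 := by
  have e0 : ![x, y, z, w] ∘ (0 : Fin 4).succAbove = ![y, z, w] := by ext i; fin_cases i <;> rfl
  have e1 : ![x, y, z, w] ∘ (1 : Fin 4).succAbove = ![x, z, w] := by ext i; fin_cases i <;> rfl
  have e2 : ![x, y, z, w] ∘ (2 : Fin 4).succAbove = ![x, y, w] := by ext i; fin_cases i <;> rfl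
  have e3 : ![x, y, z, w] ∘ (3 : Fin 4).succAbove = ![x, y, z] := by ext i; fin_cases i <;> rfl
  rw [bdryFull, Finsupp.linearCombination_single, one_smul, Fin.sum_univ_four, e0, e1, e2, e3]
  norm_num
  abel

lemma mem_allowedMod_iff {G : Dgraph V} {p : ℕ} {g : EPath V p →₀ K} :
    g ∈ allowedMod K V G p ↔ ∀ f ∈ g.support, IsAllowedPath G f := by
  have hspan : allowedMod K V G p = Finsupp.supported K K {f | IsAllowedPath G f} := by
    rw [Finsupp.supported_eq_span_single, allowedMod]
    congr 1
    ext x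
    simp [eq_comm]
  rw [hspan, Finsupp.mem_supported]
  rfl

lemma regProj_mem_allowedMod {G : Dgraph V} {p : ℕ} {g : EPath V p →₀ K}
    (hg : g ∈ allowedMod K V G p) : regProj K V p g ∈ allowedMod K V G p := by
  rw [mem_allowedMod_iff] at hg ⊢
  intro f hf
  rw [Finsupp.mem_support_iff, regProj_apply] at hf
  split_ifs at hf
  · exact hg f (Finsupp.mem_support_iff.2 hf)
  · exact absurd rfl hf

lemma mem_Omega_succ_iff {G : Dgraph V} {p : ℕ}
    {ω : EPath V (p + 1) →₀ K} :
    ω ∈ Omega K V G (p + 1) ↔ ω ∈ allowedMod K V G (p + 1) ∧ bdry K V p ω ∈ allowedMod K V G p :=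
  Iff.rfl

lemma IsMinimal.eq_smul_of_support_subset {G : Dgraph V} {p : ℕ} {ω ω' : EPath V p →₀ K}
    (hmin : IsMinimal K G p ω) (hω' : ω' ∈ Omega K V G p) (hsub : ω'.support ⊆ ω.support)
    {f : EPath V p} (hf : ω' f = 1) : ω = ω f • ω' := by
  by_contra hne
  have hδ : ω - ω f • ω' ∈ Omega K V G p := sub_mem hmin.1 (Submodule.smul_mem _ _ hω')
  refine hmin.2.2 _ hδ (sub_ne_zero.2 hne) ((Finset.ssubset_iff_of_subset ?_).2 ?_)
  · refine Finsupp.support_sub.trans (Finset.union_subset le_rfl ?_)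
    exact (Finsupp.support_smul).trans hsub
  · refine ⟨f, hsub (by simp [hf]), ?_⟩
    simp [hf]

end Chains

section Cluster

variable {K : Type*} [Field K] {V : Type*} {G : Dgraph V} {a b : V} {ω : EPath V 3 →₀ K}

lemma IsCluster.eq_vec4 (hcl : IsCluster a b ω) {f : EPath V 3}
    (hf : f ∈ ω.support) : f = ![a, f 1, f 2, b] := by
  ext k
  fin_cases k
  exacts [(hcl f hf).1, rfl, rfl, (hcl f hf).2]

lemma bdryFull_single_vec4_apply_vec3 {i j x : V} (c : K) (hia : i ≠ a) (hjb : j ≠ b) :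
    bdryFull K V 2 (Finsupp.single ![a, i, j, b] c) ![a, x, b] =
      (if i = x then c else 0) - (if j = x then c else 0) := by
  rw [← Finsupp.smul_single_one, map_smul, bdryFull_single_vec4]
  split_ifs <;> subst_vars <;> simp [*]

lemma bdry_apply_vec3 {x : V} (hcl : IsCluster a b ω)
    (hω : ∀ f ∈ ω.support, f 1 ≠ a ∧ f 2 ≠ b) (hax : a ≠ x) (hxb : x ≠ b) :
    bdry K V 2 ω ![a, x, b] =
      ∑ f ∈ ω.support with f 1 = x, ω f - ∑ f ∈ ω.support with f 2 = x, ω f := by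
  have hterm : ∀ f ∈ ω.support, bdryFull K V 2 (Finsupp.single f (ω f)) ![a, x, b] =
      (if f 1 = x then ω f else 0) - (if f 2 = x then ω f else 0) := by
    intro f hf
    rw [congrArg (Finsupp.single · (ω f)) (hcl.eq_vec4 hf),
      bdryFull_single_vec4_apply_vec3 _ (hω f hf).1 (hω f hf).2]
  rw [bdry, LinearMap.comp_apply, regProj_apply, if_pos (isRegularPath_vec3.2 ⟨hax, hxb⟩)]
  conv_lhs => rw [← Finsupp.sum_single ω]
  rw [map_finsuppSum, Finsupp.sum_apply, Finsupp.sum,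
    Finset.sum_congr rfl hterm, Finset.sum_sub_distrib, Finset.sum_filter, Finset.sum_filter]

lemma IsCluster.adj_of_mem_support (hcl : IsCluster a b ω) (hA : ω ∈ allowedMod K V G 3)
    {f : EPath V 3} (hf : f ∈ ω.support) : G.Adj a (f 1) ∧ G.Adj (f 1) (f 2) ∧ G.Adj (f 2) b := by
  have hfA := mem_allowedMod_iff.1 hA f hf
  rw [hcl.eq_vec4 hf] at hfA
  exact isAllowedPath_vec4.1 hfA

lemma IsCluster.sum_fst_eq_sum_snd (hcl : IsCluster a b ω) (hΩ : ω ∈ Omega K V G 3) {x : V}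
    (hax : a ≠ x) (hxb : x ≠ b) (hx : ¬ IsAllowedPath G ![a, x, b]) :
    ∑ f ∈ ω.support with f 1 = x, ω f = ∑ f ∈ ω.support with f 2 = x, ω f := by
  obtain ⟨hA, hbA⟩ := mem_Omega_succ_iff.1 hΩ
  have hne : ∀ f ∈ ω.support, f 1 ≠ a ∧ f 2 ≠ b := fun f hf =>
    ⟨(G.ne_of_adj (hcl.adj_of_mem_support hA hf).1).symm,
      G.ne_of_adj (hcl.adj_of_mem_support hA hf).2.2⟩
  have hzero : bdry K V 2 ω ![a, x, b] = 0 := by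
    by_contra h
    exact hx (mem_allowedMod_iff.1 hbA _ (Finsupp.mem_support_iff.2 h))
  rwa [bdry_apply_vec3 hcl hne hax hxb, sub_eq_zero] at hzero

lemma IsCluster.exists_ne_snd_mem_support (hcl : IsCluster a b ω) (hΩ : ω ∈ Omega K V G 3)
    {i j : V} (h : ![a, i, j, b] ∈ ω.support) (hib : i ≠ b) (hnadj : ¬ G.Adj i b) :
    ∃ j' ≠ j, ![a, i, j', b] ∈ ω.support := by
  have hadj {f : EPath V 3} := hcl.adj_of_mem_support (mem_Omega_succ_iff.1 hΩ).1 (f := f)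
  have hrow : ∑ f ∈ ω.support with f 1 = i, ω f = 0 := by
    rw [hcl.sum_fst_eq_sum_snd (x := i) hΩ (G.ne_of_adj (hadj h).1) hib
      fun hp => hnadj (isAllowedPath_vec3.1 hp).2]
    refine Finset.sum_eq_zero fun f hf => absurd ?_ hnadj
    rw [Finset.mem_filter] at hf
    exact hf.2 ▸ (hadj hf.1).2.2
  obtain ⟨f, hf, hfne⟩ := Finset.exists_mem_ne_of_sum_eq_zero hrow (Finset.mem_filter.2 ⟨h, rfl⟩)
    (Finsupp.mem_support_iff.1 h)
  rw [Finset.mem_filter] at hf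
  have hf' : f = ![a, i, f 2, b] := (hcl.eq_vec4 hf.1).trans (by rw [hf.2])
  exact ⟨f 2, fun hj => hfne (hf'.trans (by rw [hj])), hf' ▸ hf.1⟩

lemma IsCluster.exists_ne_fst_mem_support (hcl : IsCluster a b ω) (hΩ : ω ∈ Omega K V G 3)
    {i j : V} (h : ![a, i, j, b] ∈ ω.support) (haj : a ≠ j) (hnadj : ¬ G.Adj a j) :
    ∃ i' ≠ i, ![a, i', j, b] ∈ ω.support := by
  have hadj {f : EPath V 3} := hcl.adj_of_mem_support (mem_Omega_succ_iff.1 hΩ).1 (f := f)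
  have hcol : ∑ f ∈ ω.support with f 2 = j, ω f = 0 := by
    rw [← hcl.sum_fst_eq_sum_snd (x := j) hΩ haj (G.ne_of_adj (hadj h).2.2)
      fun hp => hnadj (isAllowedPath_vec3.1 hp).1]
    refine Finset.sum_eq_zero fun f hf => absurd ?_ hnadj
    rw [Finset.mem_filter] at hf
    exact hf.2 ▸ (hadj hf.1).1
  obtain ⟨f, hf, hfne⟩ := Finset.exists_mem_ne_of_sum_eq_zero hcol (Finset.mem_filter.2 ⟨h, rfl⟩)
    (Finsupp.mem_support_iff.1 h)
  rw [Finset.mem_filter] at hf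
  have hf' : f = ![a, f 1, j, b] := (hcl.eq_vec4 hf.1).trans (by rw [hf.2])
  exact ⟨f 1, fun hi => hfne (hf'.trans (by rw [hi])), hf' ▸ hf.1⟩

end Cluster

section Trapezohedron

variable {V : Type*} {m : ℕ}

/-- The image of `tau K m` under `TVert.vi k ↦ iv k`, `TVert.vj k ↦ jv k`. -/
noncomputable def trapezohedralPath (K : Type*) [Field K] (a b : V) (iv jv : Fin m → V) :
    EPath V 3 →₀ K :=
  ∑ k : Fin m, (Finsupp.single ![a, iv k, jv k, b] (1 : K)
    - Finsupp.single ![a, iv (finRot k), jv k, b] (1 : K))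

variable {K : Type*} [Field K] {a b : V} {iv jv : Fin m → V}

lemma trapezohedralPath_support_subset {s : Finset (EPath V 3)}
    (hs : ∀ k, ![a, iv k, jv k, b] ∈ s) (hs' : ∀ k, ![a, iv (finRot k), jv k, b] ∈ s) :
    (trapezohedralPath K a b iv jv).support ⊆ s := by
  refine Finsupp.support_finsetSum.trans (Finset.biUnion_subset.2 fun k _ => ?_)
  refine Finsupp.support_sub.trans (Finset.union_subset ?_ ?_) <;>
    refine Finsupp.support_single_subset.trans (Finset.singleton_subset_iff.2 ?_)
  exacts [hs k, hs' k]

lemma trapezohedralPath_apply (hm : 2 ≤ m)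
    (hiv : Function.Injective iv) (hjv : Function.Injective jv) (k₀ : Fin m) :
    trapezohedralPath K a b iv jv ![a, iv k₀, jv k₀, b] = 1 := by
  have hrot : ∀ k, ¬(finRot k = k₀ ∧ k = k₀) := by
    rintro k ⟨h, rfl⟩
    exact finRot_ne_self hm k h
  simp [trapezohedralPath, Finsupp.single_apply, hiv.eq_iff, hjv.eq_iff, hrot]

/-- The boundary of `e_{a iₖ jₖ b} - e_{a iₖ₊₁ jₖ b}` is allowed up to `e_{a iₖ b} - e_{a iₖ₊₁ b}`,
and these telescope around the cycle. -/
lemma trapezohedralPath_mem_Omega {G : Dgraph V}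
    (hcell : ∀ k, IsAllowedPath G ![a, iv k, jv k, b])
    (hcell' : ∀ k, IsAllowedPath G ![a, iv (finRot k), jv k, b]) :
    trapezohedralPath K a b iv jv ∈ Omega K V G 3 := by
  have hsingle : ∀ {f : EPath V 2}, IsAllowedPath G f →
      Finsupp.single f (1 : K) ∈ allowedMod K V G 2 :=
    fun hf => Submodule.subset_span ⟨_, hf, rfl⟩
  have htelescope : ∑ k : Fin m, (Finsupp.single ![a, iv k, b] (1 : K)
      - Finsupp.single ![a, iv (finRot k), b] 1) = 0 := by
    rw [Finset.sum_sub_distrib, sub_eq_zero]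
    simp only [finRot_eq_finRotate]
    exact (Equiv.sum_comp (finRotate m) (fun k => Finsupp.single ![a, iv k, b] (1 : K))).symm
  have hbdry : bdryFull K V 2 (trapezohedralPath K a b iv jv) =
      ∑ k : Fin m, ((Finsupp.single ![iv k, jv k, b] 1 - Finsupp.single ![a, iv k, jv k] 1)
        - (Finsupp.single ![iv (finRot k), jv k, b] 1 - Finsupp.single ![a, iv (finRot k), jv k] 1))
      + ∑ k : Fin m, (Finsupp.single ![a, iv k, b] (1 : K)
        - Finsupp.single ![a, iv (finRot k), b] 1) := by
    simp only [trapezohedralPath, map_sum, map_sub, bdryFull_single_vec4, ← Finset.sum_add_distrib]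
    exact Finset.sum_congr rfl fun k _ => by abel
  refine Submodule.mem_inf.2 ⟨Submodule.sum_mem _ fun k _ => Submodule.sub_mem _ ?_ ?_, ?_⟩
  · exact Submodule.subset_span ⟨_, hcell k, rfl⟩
  · exact Submodule.subset_span ⟨_, hcell' k, rfl⟩
  · rw [Submodule.mem_comap, bdry, LinearMap.comp_apply]
    refine regProj_mem_allowedMod ?_
    rw [hbdry, htelescope, add_zero]
    refine Submodule.sum_mem _ fun k _ => ?_
    obtain ⟨hai, hij, hjb⟩ := isAllowedPath_vec4.1 (hcell k)
    obtain ⟨hai', hij', -⟩ := isAllowedPath_vec4.1 (hcell' k)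
    refine Submodule.sub_mem _ (Submodule.sub_mem _ ?_ ?_) (Submodule.sub_mem _ ?_ ?_)
    exacts [hsingle (isAllowedPath_vec3.2 ⟨hij, hjb⟩), hsingle (isAllowedPath_vec3.2 ⟨hai, hij⟩),
      hsingle (isAllowedPath_vec3.2 ⟨hij', hjb⟩), hsingle (isAllowedPath_vec3.2 ⟨hai', hij'⟩)]

end Trapezohedron

theorem statement17 (K : Type*) [Field K] {V : Type*} (G : Dgraph V) (a b : V)
    (ω : EPath V 3 →₀ K) (hmin : IsMinimal K G 3 ω) (hcl : IsCluster a b ω)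
    (hterm : ∀ f ∈ ω.support,
        ¬ G.Adj a (f 2) ∧ a ≠ f 2 ∧ ¬ G.Adj (f 1) b ∧ f 1 ≠ b) :
    ∃ (m : ℕ) (_ : 2 ≤ m) (c : K) (iv jv : Fin m → V),
      Function.Injective iv ∧ Function.Injective jv ∧
      (∀ k : Fin m, iv k ∈ setA G a b \ setB G a b) ∧
      (∀ k : Fin m, jv k ∈ setB G a b \ setA G a b) ∧
      (∀ k : Fin m, G.Adj (iv k) (jv k)) ∧
      (∀ k : Fin m, G.Adj (iv (finRot k)) (jv k)) ∧
      ω = c • ∑ k : Fin m, (Finsupp.single ![a, iv k, jv k, b] (1 : K)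
          - Finsupp.single ![a, iv (finRot k), jv k, b] (1 : K)) := by
  have hA := (mem_Omega_succ_iff.1 hmin.1).1
  let R : V → V → Prop := fun i j => ![a, i, j, b] ∈ ω.support
  have hterm' : ∀ {i j}, R i j → ¬ G.Adj a j ∧ a ≠ j ∧ ¬ G.Adj i b ∧ i ≠ b := hterm _
  have hadj : ∀ {i j}, R i j → G.Adj a i ∧ G.Adj i j ∧ G.Adj j b := hcl.adj_of_mem_support hA
  have hfin : {p : V × V | R p.1 p.2}.Finite :=
    (ω.support.finite_toSet.image fun f => (f 1, f 2)).subset fun p hp => ⟨_, hp, rfl⟩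
  obtain ⟨f₀, hf₀⟩ := Finsupp.support_nonempty_iff.2 hmin.2.1
  obtain ⟨m, hm, iv, jv, hiv, hjv, hcell, hcell'⟩ : HasBipartiteCycle R :=
    hasBipartiteCycle_of_forall_exists_ne hfin (i₀ := f₀ 1) (j₀ := f₀ 2)
      (show R _ _ from hcl.eq_vec4 hf₀ ▸ hf₀)
      (fun _ _ h => hcl.exists_ne_snd_mem_support hmin.1 h (hterm' h).2.2.2 (hterm' h).2.2.1)
      (fun _ _ h => hcl.exists_ne_fst_mem_support hmin.1 h (hterm' h).2.1 (hterm' h).1)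
  let k₀ : Fin m := ⟨0, by omega⟩
  refine ⟨m, hm, ω ![a, iv k₀, jv k₀, b], iv, jv, hiv, hjv, fun k => ?_, fun k => ?_,
    fun k => (hadj (hcell k)).2.1, fun k => (hadj (hcell' k)).2.1, ?_⟩
  · exact ⟨⟨(hadj (hcell k)).1, (hterm' (hcell k)).2.2.2⟩, fun h => (hterm' (hcell k)).2.2.1 h.1⟩
  · exact ⟨⟨(hadj (hcell k)).2.2, (hterm' (hcell k)).2.1.symm⟩, fun h => (hterm' (hcell k)).1 h.1⟩
  · exact hmin.eq_smul_of_support_subset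
      (trapezohedralPath_mem_Omega (fun k => mem_allowedMod_iff.1 hA _ (hcell k))
        (fun k => mem_allowedMod_iff.1 hA _ (hcell' k)))
      (trapezohedralPath_support_subset hcell hcell') (trapezohedralPath_apply hm hiv hjv k₀)
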